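/- arXiv:1607.04310 — 2 statements merged into one kernel-verified Lean document; each statement's English description precedes it below -/
import Mathlib

section
/- Let G be a topological group, H a closed subgroup, and I a normal subgroup of G. Let X = G/H with base point x₀ = eH, let F be the closure in X of the I-orbit of x₀, and let J be the closure in G of the set I·H. Then J is a subgroup of G contained in the stabilizer Stab_G(F) = {g ∈ G : g·F = F}. -/
open Pointwise

/-! The preimage of `F` in `G` is `J = closure (I * H)`, which is the closure of the subgroup
`I ⊔ H` (as `I` is normal) and hence a subgroup. So `F` is the image of the subgroup `J` in
`G ⧸ H`, and left translation by an element of `J` permutes `J`, hence fixes its image. -/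

namespace QuotientGroup

variable {G : Type*} [Group G]

theorem smul_image_mk_of_mem {H K : Subgroup G} {g : G} (hg : g ∈ K) :
    g • ((↑) '' (K : Set G) : Set (G ⧸ H)) = (↑) '' (K : Set G) := by
  rw [← Set.image_smul_comm ((↑) : G → G ⧸ H) g _ fun _ => rfl, smul_coe_set hg]

variable [TopologicalSpace G] [IsTopologicalGroup G]

theorem closure_image_mk (H : Subgroup G) (s : Set G) :
    closure (((↑) : G → G ⧸ H) '' s) = (↑) '' closure (s * (H : Set G)) := by
  rw [← preimage_image_mk_eq_mul,
    ← isOpenMap_coe.preimage_closure_eq_closure_preimage continuous_quotient_mk',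
    Set.image_preimage_eq _ mk_surjective]

end QuotientGroup

open QuotientGroup

theorem stmt0_general {G : Type*} [Group G] [TopologicalSpace G] [IsTopologicalGroup G]
    (H I : Subgroup G) [I.Normal]
    (x₀ : G ⧸ H) (hx₀ : x₀ = QuotientGroup.mk 1)
    (F : Set (G ⧸ H)) (hF : F = closure ((fun i : G => i • x₀) '' (I : Set G)))
    (Jset : Set G) (hJ : Jset = closure ((I : Set G) * (H : Set G))) :
    ∃ J : Subgroup G, (J : Set G) = Jset ∧ ∀ g ∈ J, g • F = F := by
  subst hx₀ hF hJ
  have horbit : (fun i : G => i • (mk 1 : G ⧸ H)) '' (I : Set G) = (↑) '' (I : Set G) := by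
    ext; simp
  refine ⟨(I ⊔ H).topologicalClosure, by rw [Subgroup.topologicalClosure_coe, Subgroup.normal_mul],
    fun g hg => ?_⟩
  rw [horbit, closure_image_mk, ← Subgroup.normal_mul, ← Subgroup.topologicalClosure_coe]
  exact smul_image_mk_of_mem hg

/-- Let `G` be a topological group, `H` a closed subgroup, and `I` a
normal subgroup of `G`.  Let `X = G/H` with base point `x₀ = eH`, let `F` be the closure
in `X` of the `I`-orbit of `x₀`, and let `J` be the closure in `G` of the set `I·H`.
Then `J` is a subgroup of `G` contained in the stabilizer `{g : g • F = F}`. -/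
theorem stmt0 {G : Type*} [Group G] [TopologicalSpace G] [IsTopologicalGroup G]
    (H I : Subgroup G) (hH : IsClosed (H : Set G)) [I.Normal]
    (x₀ : G ⧸ H) (hx₀ : x₀ = QuotientGroup.mk 1)
    (F : Set (G ⧸ H)) (hF : F = closure ((fun i : G => i • x₀) '' (I : Set G)))
    (Jset : Set G) (hJ : Jset = closure ((I : Set G) * (H : Set G))) :
    ∃ J : Subgroup G, (J : Set G) = Jset ∧ ∀ g ∈ J, g • F = F :=
  stmt0_general H I x₀ hx₀ F hF Jset hJ
end

section
/- Let G be a connected complex Lie group and H a closed complex subgroup. Define J := {g ∈ G : f(gH) = f(eH) for all holomorphic functions f on G/H}. Then J is a closed complex subgroup of G containing H. -/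
open scoped Manifold

/-- Closure under products only needs `F` to be stable under left translations:
`f (a * b) = f a = f 1` by testing `b` against `x ↦ f (a * x)`. -/
def Subgroup.baseValueStabilizer {G Y : Type*} [Group G] (F : Set (G → Y))
    (hF : ∀ f ∈ F, ∀ a : G, (fun x => f (a * x)) ∈ F) : Subgroup G where
  carrier := {g | ∀ f ∈ F, f g = f 1}
  mul_mem' {a b} ha hb f hf := by
    have hab : f (a * b) = f a := by simpa using hb _ (hF f hf a)
    exact hab.trans (ha f hf)
  one_mem' _ _ := rfl
  inv_mem' {a} ha f hf := by
    have h1 : f 1 = f a⁻¹ := by simpa using ha _ (hF f hf a⁻¹)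
    exact h1.symm

namespace Subgroup.baseValueStabilizer

variable {G Y : Type*} [Group G] {F : Set (G → Y)}
  {hF : ∀ f ∈ F, ∀ a : G, (fun x => f (a * x)) ∈ F}

theorem mem_iff {g : G} : g ∈ baseValueStabilizer F hF ↔ ∀ f ∈ F, f g = f 1 := Iff.rfl

theorem isClosed [TopologicalSpace G] [TopologicalSpace Y] [T2Space Y]
    (hcont : ∀ f ∈ F, Continuous f) : IsClosed (baseValueStabilizer F hF : Set G) := by
  have hJ : (baseValueStabilizer F hF : Set G) = ⋂ f ∈ F, {g | f g = f 1} := by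
    ext g
    simp only [SetLike.mem_coe, mem_iff, Set.mem_iInter, Set.mem_ofPred_eq]
  rw [hJ]
  exact isClosed_biInter fun f hf => isClosed_eq (hcont f hf) continuous_const

theorem le_of_rightInvariant {H : Subgroup G}
    (hinv : ∀ f ∈ F, ∀ a : G, ∀ h ∈ H, f (a * h) = f a) :
    H ≤ baseValueStabilizer F hF := fun h hh f hf => by
  simpa using hinv f hf 1 h hh

end Subgroup.baseValueStabilizer

section RightInvariant

variable {𝕜 : Type*} [NontriviallyNormedField 𝕜]
  {E : Type*} [NormedAddCommGroup E] [NormedSpace 𝕜 E] {HG : Type*} [TopologicalSpace HG]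
  {G : Type*} [TopologicalSpace G] [ChartedSpace HG G] [Group G]
  {E' : Type*} [NormedAddCommGroup E'] [NormedSpace 𝕜 E'] {HM : Type*} [TopologicalSpace HM]
  {M : Type*} [TopologicalSpace M] [ChartedSpace HM M]

/-- The functions on `G / H`, viewed as right `H`-invariant functions on `G`. -/
def rightInvariantMDifferentiable (I : ModelWithCorners 𝕜 E HG) (I' : ModelWithCorners 𝕜 E' HM)
    (H : Subgroup G) : Set (G → M) :=
  {f | MDifferentiable I I' f ∧ ∀ a : G, ∀ h ∈ H, f (a * h) = f a}

theorem mul_left_mem_rightInvariantMDifferentiable {I : ModelWithCorners 𝕜 E HG}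
    {I' : ModelWithCorners 𝕜 E' HM} {n : WithTop ℕ∞} [ContMDiffMul I n G] (hn : n ≠ 0)
    {H : Subgroup G} {f : G → M} (hf : f ∈ rightInvariantMDifferentiable I I' H)
    (a : G) : (fun x => f (a * x)) ∈ rightInvariantMDifferentiable I I' H :=
  ⟨hf.1.comp (contMDiff_mul_left.mdifferentiable hn),
    fun c h hh => by simpa only [mul_assoc] using hf.2 (a * c) h hh⟩

end RightInvariant

theorem stmt11_general {E : Type*} [NormedAddCommGroup E] [NormedSpace ℂ E]
    {G : Type*} [TopologicalSpace G] [ChartedSpace E G] [Group G]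
    [LieGroup 𝓘(ℂ, E) (⊤ : ℕ∞) G]
    (H : Subgroup G) :
    ∃ J : Subgroup G,
      (J : Set G) = {g : G | ∀ f : G → ℂ, MDifferentiable 𝓘(ℂ, E) 𝓘(ℂ) f →
          (∀ (a : G), ∀ h ∈ H, f (a * h) = f a) → f g = f 1}
        ∧ IsClosed (J : Set G) ∧ H ≤ J := by
  let F : Set (G → ℂ) := rightInvariantMDifferentiable 𝓘(ℂ, E) 𝓘(ℂ) H
  have hF : ∀ f ∈ F, ∀ a : G, (fun x => f (a * x)) ∈ F := fun f hf =>
    mul_left_mem_rightInvariantMDifferentiable (n := (⊤ : ℕ∞)) (by simp) hf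
  refine ⟨Subgroup.baseValueStabilizer F hF, ?_,
    Subgroup.baseValueStabilizer.isClosed fun f hf => hf.1.continuous,
    Subgroup.baseValueStabilizer.le_of_rightInvariant fun f hf => hf.2⟩
  ext g
  simp [Subgroup.baseValueStabilizer.mem_iff, F, rightInvariantMDifferentiable]

/-- Let `G` be a connected complex Lie group and `H` a closed complex
subgroup.  Identifying the holomorphic functions on `G/H` with the right `H`-invariant
holomorphic functions on `G`, define
`J := {g ∈ G : f(gH) = f(eH) for all f ∈ 𝒪(G/H)}`.
Then `J` is a closed subgroup of `G` containing `H`. -/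
theorem stmt11 {E : Type*} [NormedAddCommGroup E] [NormedSpace ℂ E]
    {G : Type*} [TopologicalSpace G] [ChartedSpace E G] [Group G]
    [IsTopologicalGroup G] [LieGroup 𝓘(ℂ, E) (⊤ : ℕ∞) G] [ConnectedSpace G]
    (H : Subgroup G) (hH : IsClosed (H : Set G)) :
    ∃ J : Subgroup G,
      (J : Set G) = {g : G | ∀ f : G → ℂ, MDifferentiable 𝓘(ℂ, E) 𝓘(ℂ) f →
          (∀ (a : G), ∀ h ∈ H, f (a * h) = f a) → f g = f 1}
        ∧ IsClosed (J : Set G) ∧ H ≤ J :=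
  stmt11_general H
end
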